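/- If n is odd, n > 200, and P_n has the Lehmer property, then 2^{2ω(P_n)} divides P_n - 1, where ω(P_n) is the number of distinct prime factors of P_n. -/
import Mathlib


def pellP : ℕ → ℕ
  | 0 => 0
  | 1 => 1
  | n + 2 => 2 * pellP (n + 1) + pellP n

def pellQ : ℕ → ℕ
  | 0 => 2
  | 1 => 2
  | n + 2 => 2 * pellQ (n + 1) + pellQ n

lemma pellP_add (m : ℕ) : ∀ n, pellP (m + n + 1) = pellP (m + 1) * pellP (n + 1) + pellP m * pellP n := by
  intro n
  induction n using Nat.twoStepInduction with
  | zero => simp [pellP]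
  | one => show pellP (m + 2) = _; simp [pellP]; ring
  | more n ih1 ih2 =>
    have h : m + (n + 2) + 1 = (m + n + 1) + 2 := by ring
    rw [h, pellP]
    have h1 : m + n + 1 + 1 = m + (n+1) + 1 := by ring
    rw [h1, ih2, ih1]
    show _ = pellP (m+1) * (2 * pellP (n+2) + pellP (n+1)) + pellP m * (2 * pellP (n+1) + pellP n)
    ring

lemma pellP_coprime : ∀ n, Nat.Coprime (pellP (n + 1)) (pellP n) := by
  intro n
  induction n with
  | zero => simp [pellP]
  | succ n ih =>
    show Nat.Coprime (pellP (n + 2)) (pellP (n + 1))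
    rw [pellP]
    have : 2 * pellP (n+1) + pellP n = pellP n + pellP (n+1) * 2 := by ring
    rw [this, Nat.coprime_add_mul_left_left]
    exact ih.symm

lemma pellP_mod_two : ∀ n, pellP n % 2 = n % 2 := by
  intro n
  induction n using Nat.twoStepInduction with
  | zero => rfl
  | one => rfl
  | more n ih1 ih2 => rw [pellP]; omega

lemma pellP_prime_mod_four {n p : ℕ} (hn : Odd n) (hp : p.Prime) (hdvd : p ∣ pellP n) :
    p % 4 = 1 := by
  obtain ⟨k, hk⟩ := hn
  have hid : pellP n = pellP (k+1) * pellP (k+1) + pellP k * pellP k := by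
    rw [hk, show 2*k+1 = k + k + 1 from by ring, pellP_add]
  have hodd : pellP n % 2 = 1 := by rw [pellP_mod_two]; omega
  have hp2 : p ≠ 2 := by
    rintro rfl
    obtain ⟨c, hc⟩ := hdvd
    omega
  have hpk : ¬ p ∣ pellP k := by
    intro h
    have hbb : p ∣ pellP k * pellP k := h.mul_left _
    have h1 : p ∣ pellP (k+1) * pellP (k+1) := by
      have h2 := hid ▸ hdvd
      exact (Nat.dvd_add_iff_left hbb).mpr h2
    have h3 : p ∣ pellP (k+1) := (Nat.Prime.dvd_mul hp).mp h1 |>.elim id id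
    have := Nat.eq_one_of_dvd_coprimes (pellP_coprime k) h3 h
    exact hp.one_lt.ne' this
  haveI : Fact p.Prime := ⟨hp⟩
  set a : ZMod p := (pellP (k+1) : ZMod p)
  set b : ZMod p := (pellP k : ZMod p)
  have hb : b ≠ 0 := by
    simpa [b, ZMod.natCast_eq_zero_iff] using hpk
  have hsum : a * a + b * b = 0 := by
    have : ((pellP n : ℕ) : ZMod p) = 0 := by
      simpa [ZMod.natCast_eq_zero_iff] using hdvd
    rw [hid] at this
    push_cast at this
    exact this
  have hsq : IsSquare (-1 : ZMod p) := by
    refine ⟨a * b⁻¹, ?_⟩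
    field_simp
    linear_combination -hsum
  have h4 : p % 4 ≠ 3 := (ZMod.exists_sq_eq_neg_one_iff).mp hsq
  have hodd' : p % 2 = 1 := (Nat.Prime.eq_two_or_odd hp).resolve_left hp2
  omega

theorem two_pow_two_omega_dvd (n : ℕ) (hn : Odd n) (h200 : 200 < n)
    (hleh : 1 < pellP n ∧ ¬ (pellP n).Prime ∧ (pellP n).totient ∣ pellP n - 1) :
    2 ^ (2 * (pellP n).primeFactors.card) ∣ pellP n - 1 := by
  obtain ⟨h1, -, htot⟩ := hleh
  set N := pellP n with hN
  have hN0 : N ≠ 0 := by omega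
  have key : 2 ^ (2 * N.primeFactors.card) ∣ N.totient := by
    rw [Nat.totient_eq_prod_factorization hN0]
    rw [Finsupp.prod, Nat.support_factorization]
    calc 2 ^ (2 * N.primeFactors.card)
          = ∏ _p ∈ N.primeFactors, 4 := by
            rw [Finset.prod_const, pow_mul]; norm_num
      _ ∣ _ := by
            apply Finset.prod_dvd_prod_of_dvd
            intro p hp
            have hpp : p.Prime := Nat.prime_of_mem_primeFactors hp
            have hpd : p ∣ N := Nat.dvd_of_mem_primeFactors hp
            have h4 : p % 4 = 1 := pellP_prime_mod_four hn hpp hpd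
            have : (4 : ℕ) ∣ p - 1 := by omega
            exact this.mul_left _
  exact key.trans htot
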